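/- arXiv:2210.10153 — 2 statements merged into one kernel-verified Lean document; each statement's English description precedes it below -/
import Mathlib

section
/- Let β > 2, α, C > 0 and let Δ : [0,∞) → (0,∞) be differentiable with Δ'(t) ≤ -α 2^{2-β} C Δ(t)^{β-1} for all t ≥ 0. Then Δ(t) ≤ Δ(0) (1 + α(β-2)(Δ(0)/2)^{β-2} C t)^{-1/(β-2)} for all t ≥ 0. -/
/-- Algebraic decay for power-law potentials (Corollary 4.1, β > 2). -/
theorem diameter_algebraic_decay (Δ : ℝ → ℝ) (α β C : ℝ)
    (hβ : 2 < β) (hα : 0 < α) (hC : 0 < C)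
    (hΔpos : ∀ t : ℝ, 0 ≤ t → 0 < Δ t)
    (hdiff : Differentiable ℝ Δ)
    (hode : ∀ t : ℝ, 0 ≤ t →
      deriv Δ t ≤ -α * (2 : ℝ) ^ (2 - β) * C * Δ t ^ (β - 1)) :
    ∀ t : ℝ, 0 ≤ t →
      Δ t ≤ Δ 0 * (1 + α * (β - 2) * (Δ 0 / 2) ^ (β - 2) * C * t) ^ (-(1 / (β - 2))) := by
  intro t ht
  set m := β - 2 with hm_def
  have hm : 0 < m := by simp only [hm_def]; linarith
  have hΔ0 := hΔpos 0 le_rfl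
  have hΔt := hΔpos t ht
  set k := α * (2 : ℝ) ^ (2 - β) * C * m with hk_def
  have h2pos : (0:ℝ) < (2:ℝ) ^ (2 - β) := Real.rpow_pos_of_pos two_pos _
  have hk : 0 < k := by positivity
  have hmono : MonotoneOn (fun s => Δ s ^ (-m) - k * s) (Set.Ici (0:ℝ)) := by
    apply monotoneOn_of_deriv_nonneg (convex_Ici 0)
    · apply ContinuousOn.sub
      · exact ContinuousOn.rpow_const hdiff.continuous.continuousOn
          (fun s hs => Or.inl (ne_of_gt (hΔpos s hs)))
      · exact (continuous_const.mul continuous_id).continuousOn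
    · intro s hs
      rw [interior_Ici] at hs
      have hΔs := hΔpos s (le_of_lt hs)
      exact (((hdiff s).hasDerivAt.rpow_const (Or.inl hΔs.ne')).sub
        ((hasDerivAt_id s).const_mul k)).differentiableAt.differentiableWithinAt
    · intro s hs
      rw [interior_Ici] at hs
      have hs0 : (0:ℝ) ≤ s := le_of_lt hs
      have hΔs := hΔpos s hs0
      have hd : HasDerivAt (fun s => Δ s ^ (-m) - k * s)
          (deriv Δ s * (-m) * Δ s ^ (-m - 1) - k * 1) s :=
        ((hdiff s).hasDerivAt.rpow_const (Or.inl hΔs.ne')).sub ((hasDerivAt_id s).const_mul k)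
      rw [hd.deriv]
      have hode' := hode s hs0
      have hpow : (0:ℝ) < Δ s ^ (-m - 1) := Real.rpow_pos_of_pos hΔs _
      have hprod : Δ s ^ (β - 1) * Δ s ^ (-m - 1) = 1 := by
        rw [← Real.rpow_add hΔs]
        have : β - 1 + (-m - 1) = 0 := by simp [hm_def]; ring
        rw [this, Real.rpow_zero]
      have hc : (-m) * Δ s ^ (-m - 1) ≤ 0 := by nlinarith
      have := mul_le_mul_of_nonpos_right hode' hc
      have heq : -α * (2:ℝ) ^ (2 - β) * C * Δ s ^ (β - 1) * ((-m) * Δ s ^ (-m - 1)) = k := by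
        have : -α * (2:ℝ) ^ (2 - β) * C * Δ s ^ (β - 1) * ((-m) * Δ s ^ (-m - 1))
            = α * (2:ℝ) ^ (2 - β) * C * m * (Δ s ^ (β - 1) * Δ s ^ (-m - 1)) := by ring
        rw [this, hprod, hk_def, mul_one]
      nlinarith [this]
  have hbase := hmono (Set.self_mem_Ici) (Set.mem_Ici.mpr ht) ht
  simp only [mul_zero, sub_zero] at hbase
  -- hbase : Δ 0 ^ (-m) ≤ Δ t ^ (-m) - k * t
  set X := 1 + α * m * (Δ 0 / 2) ^ m * C * t with hX_def
  have hXpos : 0 < X := by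
    have : (0:ℝ) < (Δ 0 / 2) ^ m := Real.rpow_pos_of_pos (by positivity) _
    have : 0 ≤ α * m * (Δ 0 / 2) ^ m * C * t := by positivity
    simp only [hX_def]; linarith
  have hS : Δ 0 ^ (-m) * X = Δ 0 ^ (-m) + k * t := by
    have hdiv : (Δ 0 / 2) ^ m = Δ 0 ^ m / 2 ^ m :=
      Real.div_rpow hΔ0.le (by norm_num : (0:ℝ) ≤ 2) m
    have h2 : (2:ℝ) ^ (2 - β) = ((2:ℝ) ^ m)⁻¹ := by
      rw [show (2:ℝ) ^ (2 - β) = (2:ℝ) ^ (-m) by rw [hm_def]; ring_nf,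
        Real.rpow_neg (by norm_num)]
    have hΔmul : Δ 0 ^ (-m) * Δ 0 ^ m = 1 := by
      rw [← Real.rpow_add hΔ0]; simp
    have h2m : (0:ℝ) < (2:ℝ) ^ m := Real.rpow_pos_of_pos two_pos _
    rw [hX_def, hk_def, hdiv, h2]
    linear_combination (α * C * m * t / 2 ^ m) * hΔmul
  have hSle : Δ 0 ^ (-m) * X ≤ Δ t ^ (-m) := by rw [hS]; linarith
  have hSpos : 0 < Δ 0 ^ (-m) * X := by
    have : (0:ℝ) < Δ 0 ^ (-m) := Real.rpow_pos_of_pos hΔ0 _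
    positivity
  have hfinal := Real.rpow_le_rpow_of_nonpos (z := -(1/m)) hSpos hSle
    (neg_nonpos.mpr (by positivity))
  have hL : (Δ t ^ (-m)) ^ (-(1/m)) = Δ t := by
    rw [← Real.rpow_mul hΔt.le]
    rw [show (-m) * (-(1/m)) = 1 by field_simp, Real.rpow_one]
  have hR : (Δ 0 ^ (-m) * X) ^ (-(1/m)) = Δ 0 * X ^ (-(1/m)) := by
    rw [Real.mul_rpow (le_of_lt (Real.rpow_pos_of_pos hΔ0 _)) hXpos.le,
      ← Real.rpow_mul hΔ0.le, show (-m) * (-(1/m)) = 1 by field_simp, Real.rpow_one]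
  rw [hL, hR] at hfinal
  exact hfinal
end

section
/- Let (X, d) be a metric space, p ∈ X, r > 0, and let ρ be a Borel probability measure supported in the closed ball of radius r around p. Then for any q in that closed ball, the 2-Wasserstein distance satisfies W₂(ρ, δ_q) ≥ (1/2) ∬ d(x,y) dρ(x) dρ(y), where the double integral is over the closed ball squared. -/
open MeasureTheory

/-- The intrinsic 2-Wasserstein distance, defined via transport plans. -/
noncomputable def W2 {X : Type*} [MetricSpace X] [MeasurableSpace X]
    (ρ σ : Measure X) : ℝ :=
  Real.sqrt (sInf {I : ℝ | ∃ γ : Measure (X × X),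
    γ.map Prod.fst = ρ ∧ γ.map Prod.snd = σ ∧ I = ∫ p, dist p.1 p.2 ^ 2 ∂γ})

/-!
The only transport plan from `ρ` to a Dirac mass `δ_q` moves every point to `q`, so
`W₂(ρ, δ_q) = (∫ d(x,q)² dρ)^{1/2}`, which by Cauchy–Schwarz is at least `m = ∫ d(x,q) dρ`.
On the other hand `d(x,y) ≤ d(x,q) + d(q,y)` integrates to `∬ d(x,y) dρ dρ ≤ 2m`.
-/

section Coupling

variable {X Y : Type*} [MeasurableSpace X] [MeasurableSpace Y] [MeasurableSingletonClass Y]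
  {γ : Measure (X × Y)} {q : Y}

theorem ae_snd_eq_of_map_snd_eq_dirac (hγ : γ.map Prod.snd = Measure.dirac q) :
    ∀ᵐ z ∂γ, z.2 = q :=
  ae_of_ae_map (p := (· = q)) measurable_snd.aemeasurable <| by
    rw [hγ, ae_dirac_eq]
    exact Filter.eventually_pure.2 rfl

theorem integral_eq_integral_map_fst_of_map_snd_eq_dirac
    (hγ : γ.map Prod.snd = Measure.dirac q) {f : X → Y → ℝ}
    (hf : AEStronglyMeasurable (fun x ↦ f x q) (γ.map Prod.fst)) :
    ∫ z, f z.1 z.2 ∂γ = ∫ x, f x q ∂(γ.map Prod.fst) := by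
  rw [integral_map measurable_fst.aemeasurable hf]
  refine integral_congr_ae ?_
  filter_upwards [ae_snd_eq_of_map_snd_eq_dirac hγ] with z hz
  rw [hz]

end Coupling

theorem W2_dirac_right {X : Type*} [MetricSpace X] [MeasurableSpace X] [OpensMeasurableSpace X]
    (ρ : Measure X) [IsProbabilityMeasure ρ] (q : X) :
    W2 ρ (Measure.dirac q) = √(∫ x, dist x q ^ 2 ∂ρ) := by
  have hcost : ∀ γ : Measure (X × X), γ.map Prod.fst = ρ → γ.map Prod.snd = Measure.dirac q →
      ∫ z, dist z.1 z.2 ^ 2 ∂γ = ∫ x, dist x q ^ 2 ∂ρ := by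
    intro γ hfst hsnd
    rw [integral_eq_integral_map_fst_of_map_snd_eq_dirac hsnd (f := fun x y ↦ dist x y ^ 2),
      hfst]
    exact ((continuous_id.dist continuous_const).pow 2).aestronglyMeasurable
  have hcosts : {I : ℝ | ∃ γ : Measure (X × X), γ.map Prod.fst = ρ ∧
      γ.map Prod.snd = Measure.dirac q ∧ I = ∫ z, dist z.1 z.2 ^ 2 ∂γ} =
      {∫ x, dist x q ^ 2 ∂ρ} := by
    ext I
    constructor
    · rintro ⟨γ, hfst, hsnd, rfl⟩
      exact hcost γ hfst hsnd
    · rintro rfl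
      exact ⟨ρ.prod (Measure.dirac q), Measure.fst_prod, Measure.snd_prod,
        (hcost _ Measure.fst_prod Measure.snd_prod).symm⟩
  rw [W2, hcosts, csInf_singleton]

theorem sq_integral_le_integral_sq {Ω : Type*} [MeasurableSpace Ω] {μ : Measure Ω}
    [IsProbabilityMeasure μ] {f : Ω → ℝ} (hf : MemLp f 2 μ) :
    (∫ ω, f ω ∂μ) ^ 2 ≤ ∫ ω, f ω ^ 2 ∂μ := by
  have hvar := ProbabilityTheory.variance_nonneg f μ
  rw [ProbabilityTheory.variance_eq_sub hf] at hvar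
  simp only [Pi.pow_apply] at hvar
  linarith

theorem integral_integral_dist_le_two_mul {X : Type*} [PseudoMetricSpace X] [MeasurableSpace X]
    (ρ : Measure X) [IsProbabilityMeasure ρ] {q : X}
    (hq : Integrable (fun x ↦ dist x q) ρ) :
    ∫ x, ∫ y, dist x y ∂ρ ∂ρ ≤ 2 * ∫ x, dist x q ∂ρ := by
  set m := ∫ x, dist x q ∂ρ
  have hinner : ∀ x, ∫ y, dist x y ∂ρ ≤ dist x q + m := fun x ↦ calc
    ∫ y, dist x y ∂ρ ≤ ∫ y, (dist x q + dist y q) ∂ρ :=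
      integral_mono_of_nonneg (.of_forall fun _ ↦ dist_nonneg)
        ((integrable_const _).add hq) (.of_forall fun y ↦ dist_triangle_right x y q)
    _ = dist x q + m := by
      rw [integral_add (integrable_const _) hq, integral_const, probReal_univ, one_smul]
  calc ∫ x, ∫ y, dist x y ∂ρ ∂ρ ≤ ∫ x, (dist x q + m) ∂ρ :=
        integral_mono_of_nonneg (.of_forall fun _ ↦ integral_nonneg fun _ ↦ dist_nonneg)
          (hq.add (integrable_const m)) (.of_forall hinner)
    _ = 2 * m := by
        rw [integral_add hq (integrable_const m), integral_const, probReal_univ, one_smul]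
        ring

theorem ae_dist_le_of_measure_closedBall_eq_one {X : Type*} [PseudoMetricSpace X]
    [MeasurableSpace X] [OpensMeasurableSpace X] {ρ : Measure X} [IsProbabilityMeasure ρ]
    {p q : X} {r : ℝ} (hsupp : ρ (Metric.closedBall p r) = 1) (hq : q ∈ Metric.closedBall p r) :
    ∀ᵐ x ∂ρ, dist x q ≤ 2 * r := by
  have hball : ∀ᵐ x ∂ρ, x ∈ Metric.closedBall p r := by
    rw [ae_mem_iff_measure_eq measurableSet_closedBall.nullMeasurableSet, hsupp, measure_univ]
  filter_upwards [hball] with x hx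
  rw [Metric.mem_closedBall] at hx hq
  linarith [dist_triangle_right x q p]

theorem wasserstein_ge_half_mean_distance_general {X : Type*} [MetricSpace X]
    [MeasurableSpace X] [BorelSpace X]
    (p : X) (r : ℝ)
    (ρ : Measure X) [IsProbabilityMeasure ρ]
    (hsupp : ρ (Metric.closedBall p r) = 1)
    (q : X) (hq : q ∈ Metric.closedBall p r) :
    W2 ρ (Measure.dirac q) ≥ (1 / 2) * ∫ x, ∫ y, dist x y ∂ρ ∂ρ := by
  have hbound : ∀ᵐ x ∂ρ, ‖dist x q‖ ≤ 2 * r := by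
    filter_upwards [ae_dist_le_of_measure_closedBall_eq_one hsupp hq] with x hx
    rwa [Real.norm_of_nonneg dist_nonneg]
  have hL2 : MemLp (fun x ↦ dist x q) 2 ρ :=
    .of_bound (continuous_id.dist continuous_const).aestronglyMeasurable _ hbound
  rw [ge_iff_le, W2_dirac_right]
  calc (1 / 2) * ∫ x, ∫ y, dist x y ∂ρ ∂ρ ≤ ∫ x, dist x q ∂ρ := by
        linarith [integral_integral_dist_le_two_mul ρ (hL2.integrable one_le_two)]
    _ ≤ √(∫ x, dist x q ^ 2 ∂ρ) := Real.le_sqrt_of_sq_le (sq_integral_le_integral_sq hL2)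

/-- Key estimate in the proof of Theorem 3.3: for ρ supported in a closed ball and q
in that ball, W₂(ρ, δ_q) ≥ (1/2) ∬ d(x,y) dρ(x) dρ(y). -/
theorem wasserstein_ge_half_mean_distance {X : Type*} [MetricSpace X]
    [MeasurableSpace X] [BorelSpace X]
    (p : X) (r : ℝ) (hr : 0 < r)
    (ρ : Measure X) [IsProbabilityMeasure ρ]
    (hsupp : ρ (Metric.closedBall p r) = 1)
    (q : X) (hq : q ∈ Metric.closedBall p r) :
    W2 ρ (Measure.dirac q) ≥ (1 / 2) * ∫ x, ∫ y, dist x y ∂ρ ∂ρ :=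
  wasserstein_ge_half_mean_distance_general p r ρ hsupp q hq
end
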